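/- Let p ≥ 3 be odd and let w₁₁, w₁₂ be the top-row entries of a product of (p−1)/2 matrices each of which is one of XY, X⁻¹Y, XY⁻¹, X⁻¹Y⁻¹ (with X, Y as above depending on m ≠ 0 and s), viewed as polynomials in s over ℂ(m). Then w₁₁ has degree exactly (p−1)/2 in s with leading coefficient ±1, and w₁₂ has degree strictly less than (p−1)/2 in s. Concretely, prove the closure property: if a 2×2 matrix A over ℂ(m)[s] has (1,1)-entry of s-degree n with leading coefficient ±1, entries (1,2),(2,2) of s-degree < n, and entry (2,1) of s-degree ≤ n, then A·B has the analogous property with degree n+1 for B any of the four matrices XY, X⁻¹Y, XY⁻¹, X⁻¹Y⁻¹. -/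

import Mathlib

open Polynomial

/-- A `2 × 2` matrix over `K[s]` whose `(1,1)`-entry has `s`-degree exactly `n` with
leading coefficient `±1`, whose `(1,2)`- and `(2,2)`-entries have `s`-degree `< n`,
and whose `(2,1)`-entry has `s`-degree `≤ n`. -/
def IsDegMatrix {K : Type*} [Field K] (n : ℕ) (A : Matrix (Fin 2) (Fin 2) K[X]) : Prop :=
  (A 0 0).degree = (n : WithBot ℕ) ∧
    ((A 0 0).leadingCoeff = 1 ∨ (A 0 0).leadingCoeff = -1) ∧
    (A 0 1).degree < (n : WithBot ℕ) ∧
    (A 1 1).degree < (n : WithBot ℕ) ∧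
    (A 1 0).degree ≤ (n : WithBot ℕ)

/-- The matrix `XY = [[m²+s, m⁻¹],[m⁻¹s, m⁻²]]` over `K[s]`. -/
noncomputable def matXY {K : Type*} [Field K] (m : K) : Matrix (Fin 2) (Fin 2) K[X] :=
  !![C (m ^ 2) + X, C m⁻¹; C m⁻¹ * X, C ((m ^ 2)⁻¹)]

/-- The matrix `X⁻¹Y = [[1−s, −m⁻¹],[ms, 1]]` over `K[s]`. -/
noncomputable def matXinvY {K : Type*} [Field K] (m : K) : Matrix (Fin 2) (Fin 2) K[X] :=
  !![1 - X, -C m⁻¹; C m * X, 1]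

/-- The matrix `XY⁻¹ = [[1−s, m],[−m⁻¹s, 1]]` over `K[s]`. -/
noncomputable def matXYinv {K : Type*} [Field K] (m : K) : Matrix (Fin 2) (Fin 2) K[X] :=
  !![1 - X, C m; -(C m⁻¹ * X), 1]

/-- The matrix `X⁻¹Y⁻¹ = [[m⁻²+s, −m],[−ms, m²]]` over `K[s]`. -/
noncomputable def matXinvYinv {K : Type*} [Field K] (m : K) : Matrix (Fin 2) (Fin 2) K[X] :=
  !![C ((m ^ 2)⁻¹) + X, -C m; -(C m * X), C (m ^ 2)]

/-!
Matrices of this shape are closed under multiplication, with degrees adding: in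
`(AB)₁₁ = A₁₁B₁₁ + A₁₂B₂₁` the first term has degree `n + k` and leading coefficient `±1` while
the second has smaller degree, and the other three entries are bounded term by term. Each of
the four matrices is such a matrix of degree `1`, since it is linear in `s` with constant second
column.
-/

namespace Polynomial

variable {R : Type*} [Semiring R] {p q : R[X]}

theorem degree_mul_lt_of_lt_of_le {a : WithBot ℕ} {b : ℕ} (hp : p.degree < a)
    (hq : q.degree ≤ b) : (p * q).degree < a + b :=
  (degree_mul_le_of_le le_rfl hq).trans_lt (WithBot.add_lt_add_right WithBot.coe_ne_bot hp)

theorem degree_mul_lt_of_le_of_lt {a : ℕ} {b : WithBot ℕ} (hp : p.degree ≤ a)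
    (hq : q.degree < b) : (p * q).degree < a + b :=
  (degree_mul_le_of_le hp le_rfl).trans_lt (WithBot.add_lt_add_left WithBot.coe_ne_bot hq)

end Polynomial

section

variable {K : Type*} [Field K]

theorem IsDegMatrix.mul {n k : ℕ} {A B : Matrix (Fin 2) (Fin 2) K[X]} (hA : IsDegMatrix n A)
    (hB : IsDegMatrix k B) : IsDegMatrix (n + k) (A * B) := by
  obtain ⟨hA00, hAlc, hA01, hA11, hA10⟩ := hA
  obtain ⟨hB00, hBlc, hB01, hB11, hB10⟩ := hB
  simp only [IsDegMatrix, Matrix.mul_apply, Fin.sum_univ_two, Nat.cast_add]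
  have hdiag : (A 0 0 * B 0 0).degree = n + k := by
    rw [degree_mul, hA00, hB00]
  have hoff : (A 0 1 * B 1 0).degree < (A 0 0 * B 0 0).degree :=
    hdiag ▸ degree_mul_lt_of_lt_of_le hA01 hB10
  refine ⟨?_, ?_, ?_, ?_, ?_⟩
  · rw [degree_add_eq_left_of_degree_lt hoff, hdiag]
  · rw [leadingCoeff_add_of_degree_lt' hoff, leadingCoeff_mul]
    rcases hAlc with h | h <;> rcases hBlc with h' | h' <;> simp [h, h']
  · exact (degree_add_le _ _).trans_lt
      (max_lt (degree_mul_lt_of_le_of_lt hA00.le hB01) (degree_mul_lt_of_lt_of_le hA01 hB11.le))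
  · exact (degree_add_le _ _).trans_lt
      (max_lt (degree_mul_lt_of_le_of_lt hA10 hB01) (degree_mul_lt_of_lt_of_le hA11 hB11.le))
  · exact (degree_add_le _ _).trans
      (max_le (degree_mul_le_of_le hA10 hB00.le) (degree_mul_lt_of_lt_of_le hA11 hB10).le)

theorem isDegMatrix_one_of_linear {ε : K} (hε : ε = 1 ∨ ε = -1) (a b c d e : K) :
    IsDegMatrix 1 !![C ε * X + C a, C b; C c * X + C d, C e] := by
  have hε0 : ε ≠ 0 := by rcases hε with rfl | rfl <;> norm_num
  refine ⟨?_, ?_, ?_, ?_, ?_⟩ <;>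
    simp only [Matrix.of_apply, Matrix.cons_val', Matrix.cons_val_zero, Matrix.cons_val_one,
      Matrix.empty_val', Matrix.cons_val_fin_one, Nat.cast_one]
  · exact degree_linear hε0
  · rwa [leadingCoeff_linear hε0]
  · exact degree_C_lt
  · exact degree_C_lt
  · exact degree_linear_le

variable (m : K)

theorem isDegMatrix_one_matXY : IsDegMatrix 1 (matXY m) := by
  convert isDegMatrix_one_of_linear (.inl rfl) (m ^ 2) m⁻¹ m⁻¹ 0 (m ^ 2)⁻¹ using 1
  simp [matXY, add_comm]

theorem isDegMatrix_one_matXinvY : IsDegMatrix 1 (matXinvY m) := by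
  convert isDegMatrix_one_of_linear (.inr rfl) 1 (-m⁻¹) m 0 1 using 1
  simp [matXinvY]
  ring

theorem isDegMatrix_one_matXYinv : IsDegMatrix 1 (matXYinv m) := by
  convert isDegMatrix_one_of_linear (.inr rfl) 1 m (-m⁻¹) 0 1 using 1
  simp [matXYinv]
  ring

theorem isDegMatrix_one_matXinvYinv : IsDegMatrix 1 (matXinvYinv m) := by
  convert isDegMatrix_one_of_linear (.inl rfl) (m ^ 2)⁻¹ (-m) (-m) 0 (m ^ 2) using 1
  simp [matXinvYinv, add_comm]

end

theorem stmt_19_general {K : Type*} [Field K] (m : K) (n : ℕ)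
    (A : Matrix (Fin 2) (Fin 2) K[X]) (hA : IsDegMatrix n A)
    (B : Matrix (Fin 2) (Fin 2) K[X])
    (hB : B ∈ ({matXY m, matXinvY m, matXYinv m, matXinvYinv m} :
      Set (Matrix (Fin 2) (Fin 2) K[X]))) :
    IsDegMatrix (n + 1) (A * B) := by
  have hB₁ : IsDegMatrix 1 B := by
    rcases hB with rfl | rfl | rfl | rfl
    exacts [isDegMatrix_one_matXY m, isDegMatrix_one_matXinvY m, isDegMatrix_one_matXYinv m,
      isDegMatrix_one_matXinvYinv m]
  exact hA.mul hB₁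

theorem stmt_19 {K : Type*} [Field K] (m : K) (hm : m ≠ 0) (n : ℕ)
    (A : Matrix (Fin 2) (Fin 2) K[X]) (hA : IsDegMatrix n A)
    (B : Matrix (Fin 2) (Fin 2) K[X])
    (hB : B ∈ ({matXY m, matXinvY m, matXYinv m, matXinvYinv m} :
      Set (Matrix (Fin 2) (Fin 2) K[X]))) :
    IsDegMatrix (n + 1) (A * B) :=
  stmt_19_general m n A hA B hB
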